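/- arXiv:1702.00107 — 2 statements merged into one kernel-verified Lean document; each statement's English description precedes it below -/
import Mathlib

section
/- Let M be the 16×16 symmetric integer matrix with diagonal entries M(i,i) = −2 for all i except M(3,3) = 0, with M(i,j) = M(j,i) = 1 exactly for the (1-indexed) pairs (i,j) ∈ {(1,4),(1,13),(2,11),(2,12),(2,15),(3,14),(3,16),(4,5),(5,6),(6,7),(7,8),(8,9),(9,10),(10,11),(13,14),(15,16)}, and all other entries 0. Then the cokernel ℤ¹⁶ / M·ℤ¹⁶ of the ℤ-linear map given by M is isomorphic as an abelian group to ℤ/3ℤ. -/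
/-- The intersection matrix of the 16 restricted toric divisors for the pair (Q₁₂, E₁₈):
diagonal entries −2 except the third which is 0, with entry 1 exactly at the
(1-indexed) symmetric pairs (1,4),(1,13),(2,11),(2,12),(2,15),(3,14),(3,16),(4,5),
(5,6),(6,7),(7,8),(8,9),(9,10),(10,11),(13,14),(15,16), and 0 elsewhere. -/
def Q12Matrix : Matrix (Fin 16) (Fin 16) ℤ :=
  !![-2, 0, 0, 1, 0, 0, 0, 0, 0, 0, 0, 0, 1, 0, 0, 0;
    0, -2, 0, 0, 0, 0, 0, 0, 0, 0, 1, 1, 0, 0, 1, 0;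
    0, 0, 0, 0, 0, 0, 0, 0, 0, 0, 0, 0, 0, 1, 0, 1;
    1, 0, 0, -2, 1, 0, 0, 0, 0, 0, 0, 0, 0, 0, 0, 0;
    0, 0, 0, 1, -2, 1, 0, 0, 0, 0, 0, 0, 0, 0, 0, 0;
    0, 0, 0, 0, 1, -2, 1, 0, 0, 0, 0, 0, 0, 0, 0, 0;
    0, 0, 0, 0, 0, 1, -2, 1, 0, 0, 0, 0, 0, 0, 0, 0;
    0, 0, 0, 0, 0, 0, 1, -2, 1, 0, 0, 0, 0, 0, 0, 0;
    0, 0, 0, 0, 0, 0, 0, 1, -2, 1, 0, 0, 0, 0, 0, 0;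
    0, 0, 0, 0, 0, 0, 0, 0, 1, -2, 1, 0, 0, 0, 0, 0;
    0, 1, 0, 0, 0, 0, 0, 0, 0, 1, -2, 0, 0, 0, 0, 0;
    0, 1, 0, 0, 0, 0, 0, 0, 0, 0, 0, -2, 0, 0, 0, 0;
    1, 0, 0, 0, 0, 0, 0, 0, 0, 0, 0, 0, -2, 1, 0, 0;
    0, 0, 1, 0, 0, 0, 0, 0, 0, 0, 0, 0, 1, -2, 0, 0;
    0, 1, 0, 0, 0, 0, 0, 0, 0, 0, 0, 0, 0, 0, -2, 1;
    0, 0, 1, 0, 0, 0, 0, 0, 0, 0, 0, 0, 0, 0, 1, -2]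

def U : Matrix (Fin 16) (Fin 16) ℤ :=
  !![1, 0, 0, 0, 0, 0, 0, 0, 0, 0, 0, 0, 0, 0, 0, 0;
    0, 1, 0, 0, 0, 0, 0, 0, 0, 0, 0, 0, 0, 0, 0, 0;
    0, 0, 1, 0, 0, 0, 0, 0, 0, 0, 0, 0, 0, 0, 0, 0;
    2, 0, 0, 1, 0, 0, 0, 0, 0, 0, 0, 0, 0, 0, 0, 0;
    3, 0, 0, 2, 1, 0, 0, 0, 0, 0, 0, 0, 0, 0, 0, 0;
    4, 0, 0, 3, 2, 1, 0, 0, 0, 0, 0, 0, 0, 0, 0, 0;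
    5, 0, 0, 4, 3, 2, 1, 0, 0, 0, 0, 0, 0, 0, 0, 0;
    6, 0, 0, 5, 4, 3, 2, 1, 0, 0, 0, 0, 0, 0, 0, 0;
    7, 0, 0, 6, 5, 4, 3, 2, 1, 0, 0, 0, 0, 0, 0, 0;
    -8, 1, 0, -7, -6, -5, -4, -3, -2, -1, 0, 0, 0, 0, 0, 0;
    9, 0, 0, 8, 7, 6, 5, 4, 3, 2, 1, 0, 0, 0, 0, 0;
    0, 0, -1, 0, 0, 0, 0, 0, 0, 0, 0, 0, 1, 0, 0, 0;
    0, 0, 2, 0, 0, 0, 0, 0, 0, 0, 0, 0, 0, 1, 0, 0;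
    0, 0, 0, 0, 0, 0, 0, 0, 0, 0, 0, 0, 0, 0, 0, 1;
    -7, 2, -10, -6, -5, -4, -3, -2, -1, 0, 1, 1, -8, -9, 2, 9;
    -9, 0, -12, -8, -7, -6, -5, -4, -3, -2, -1, 0, -10, -11, 1, 11]

def Uinv : Matrix (Fin 16) (Fin 16) ℤ :=
  !![1, 0, 0, 0, 0, 0, 0, 0, 0, 0, 0, 0, 0, 0, 0, 0;
    0, 1, 0, 0, 0, 0, 0, 0, 0, 0, 0, 0, 0, 0, 0, 0;
    0, 0, 1, 0, 0, 0, 0, 0, 0, 0, 0, 0, 0, 0, 0, 0;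
    -2, 0, 0, 1, 0, 0, 0, 0, 0, 0, 0, 0, 0, 0, 0, 0;
    1, 0, 0, -2, 1, 0, 0, 0, 0, 0, 0, 0, 0, 0, 0, 0;
    0, 0, 0, 1, -2, 1, 0, 0, 0, 0, 0, 0, 0, 0, 0, 0;
    0, 0, 0, 0, 1, -2, 1, 0, 0, 0, 0, 0, 0, 0, 0, 0;
    0, 0, 0, 0, 0, 1, -2, 1, 0, 0, 0, 0, 0, 0, 0, 0;
    0, 0, 0, 0, 0, 0, 1, -2, 1, 0, 0, 0, 0, 0, 0, 0;
    0, 1, 0, 0, 0, 0, 0, 1, -2, -1, 0, 0, 0, 0, 0, 0;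
    0, -2, 0, 0, 0, 0, 0, 0, 1, 2, 1, 0, 0, 0, 0, 0;
    0, 0, 0, 0, 0, 0, 0, 0, 0, -2, -3, -12, -13, 13, 1, -2;
    0, 0, 1, 0, 0, 0, 0, 0, 0, 0, 0, 1, 0, 0, 0, 0;
    0, 0, -2, 0, 0, 0, 0, 0, 0, 0, 0, 0, 1, 0, 0, 0;
    0, 0, 0, 0, 0, 0, 0, 0, 0, 0, 1, 10, 11, -11, 0, 1;
    0, 0, 0, 0, 0, 0, 0, 0, 0, 0, 0, 0, 0, 1, 0, 0]

def V : Matrix (Fin 16) (Fin 16) ℤ :=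
  !![0, 0, 0, 0, 0, 0, 0, 0, 0, 0, 0, 1, 2, -2, -1, 3;
    0, 0, 0, 0, 0, 0, 0, 0, 0, 0, 1, 10, 11, -11, -19, 48;
    0, 0, 0, 0, 0, 0, 0, 0, 0, 0, 0, 0, 0, 1, 5, -12;
    1, 0, 0, 0, 0, 0, 0, 0, 0, 0, 0, 2, 3, -3, -3, 8;
    0, 0, 0, 1, 0, 0, 0, 0, 0, 0, 0, 3, 4, -4, -5, 13;
    0, 0, 0, 0, 1, 0, 0, 0, 0, 0, 0, 4, 5, -5, -7, 18;
    0, 0, 0, 0, 0, 1, 0, 0, 0, 0, 0, 5, 6, -6, -9, 23;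
    0, 0, 0, 0, 0, 0, 1, 0, 0, 0, 0, 6, 7, -7, -11, 28;
    0, 0, 0, 0, 0, 0, 0, 1, 0, 0, 0, 7, 8, -8, -13, 33;
    0, 0, 0, 0, 0, 0, 0, 0, 1, 0, 0, 8, 9, -9, -15, 38;
    0, 1, 0, 0, 0, 0, 0, 0, 0, -1, 0, 9, 10, -10, -17, 43;
    0, 0, 0, 0, 0, 0, 0, 0, 0, 1, 2, 11, 12, -12, -10, 27;
    0, 0, 0, 0, 0, 0, 0, 0, 0, 0, 0, 0, 1, -1, 1, -2;
    0, 0, 1, 0, 0, 0, 0, 0, 0, 0, 0, 0, 0, 0, 3, -7;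
    0, 0, 0, 0, 0, 0, 0, 0, 0, 0, 0, 0, 0, 0, -11, 26;
    0, 0, 0, 0, 0, 0, 0, 0, 0, 0, 0, 0, 0, 0, -3, 7]

def mvec : Fin 16 → ℤ :=
  ![0, 0, 0, 0, 0, 0, 0, 0, 0, 0, 0, 0, 0, 0, 3, -11]

def Dm : Matrix (Fin 16) (Fin 16) ℤ := Matrix.diagonal (fun i => if i = 15 then 3 else 1)

def phiQ : (Fin 16 → ℤ) →ₗ[ℤ] ZMod 3 :=
  (Int.castAddHom (ZMod 3)).toIntLinearMap ∘ₗ (LinearMap.proj 15) ∘ₗ U.mulVecLin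

lemma hUinvU : Uinv * U = 1 := by decide

lemma hMV : Q12Matrix * V = Uinv * Dm := by decide

lemma hrow : (fun j => (U * Q12Matrix) 15 j) = (fun j => 3 * mvec j) := by decide

lemma ht : (U.mulVec (fun j => if j = 10 then -1 else 0)) 15 = 1 := by decide

lemma phiQ_apply (v : Fin 16 → ℤ) : phiQ v = ((U.mulVec v) 15 : ZMod 3) := rfl

lemma range_le_ker : LinearMap.range Q12Matrix.mulVecLin ≤ LinearMap.ker phiQ := by
  rintro v ⟨x, rfl⟩
  rw [LinearMap.mem_ker, Matrix.mulVecLin_apply, phiQ_apply, Matrix.mulVec_mulVec]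
  have h : ((U * Q12Matrix).mulVec x) 15 = 3 * (dotProduct mvec x) := by
    show dotProduct ((U * Q12Matrix) 15) x = _
    rw [show ((U * Q12Matrix) 15) = fun j => 3 * mvec j from hrow]
    simp [dotProduct, Finset.mul_sum, mul_assoc]
  rw [h, Int.cast_mul, show ((3 : ℤ) : ZMod 3) = 0 by decide, zero_mul]

lemma ker_le_range : LinearMap.ker phiQ ≤ LinearMap.range Q12Matrix.mulVecLin := by
  intro v hv
  rw [LinearMap.mem_ker, phiQ_apply] at hv
  have h3 : (3 : ℤ) ∣ (U.mulVec v) 15 := by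
    have := (ZMod.intCast_zmod_eq_zero_iff_dvd ((U.mulVec v) 15) 3).mp hv
    exact_mod_cast this
  obtain ⟨k, hk⟩ := h3
  refine ⟨V.mulVec (Function.update (U.mulVec v) 15 k), ?_⟩
  have hDz : Dm.mulVec (Function.update (U.mulVec v) 15 k) = U.mulVec v := by
    funext i
    rw [Dm, Matrix.mulVec_diagonal]
    by_cases h : i = 15
    · subst h; simp [Function.update_self, ← hk]
    · simp [h, Function.update_of_ne h]
  rw [Matrix.mulVecLin_apply, Matrix.mulVec_mulVec, hMV, ← Matrix.mulVec_mulVec, hDz,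
    Matrix.mulVec_mulVec, hUinvU, Matrix.one_mulVec]

lemma phiQ_surj : Function.Surjective phiQ := by
  intro c
  refine ⟨c.val • (fun j => if j = 10 then -1 else 0), ?_⟩
  rw [map_nsmul, phiQ_apply, ht]
  show (c.val : ℕ) • ((1 : ℤ) : ZMod 3) = c
  simp [nsmul_eq_mul, ZMod.natCast_val, ZMod.cast_id]

/-- The cokernel ℤ¹⁶ / M·ℤ¹⁶ of the intersection matrix for (Q₁₂, E₁₈) is
isomorphic to ℤ/3ℤ, i.e. the discriminant group of Pic(Δ) is ℤ/3ℤ. -/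
theorem cokernel_Q12Matrix :
    Nonempty (((Fin 16 → ℤ) ⧸ LinearMap.range Q12Matrix.mulVecLin) ≃+ ZMod 3) := by
  let ψ := Submodule.liftQ (LinearMap.range Q12Matrix.mulVecLin) phiQ range_le_ker
  have hinj : Function.Injective ψ := by
    rw [← LinearMap.ker_eq_bot, Submodule.ker_liftQ_eq_bot _ _ _ ker_le_range]
  have hsurj : Function.Surjective ψ := by
    intro c
    obtain ⟨x, hx⟩ := phiQ_surj c
    exact ⟨Submodule.Quotient.mk x, hx⟩
  exact ⟨(LinearEquiv.ofBijective ψ ⟨hinj, hsurj⟩).toAddEquiv⟩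
end

section
/- Let M′ be the 4×4 symmetric integer matrix with rows (−2,1,0,1), (1,0,0,0), (0,0,−2,1), (1,0,1,−2). Then there exists a matrix P ∈ GL₄(ℤ) (an integer matrix with determinant ±1) such that Pᵀ M′ P is the block-diagonal matrix with blocks [[0,1],[1,0]] and [[−2,1],[1,−2]]; that is, the lattice (ℤ⁴, M′) is isometric to U ⊕ A₂. -/
open Matrix

/-- The intersection matrix of the restricted toric divisors
`r_*D′₂, r_*D′₃, r_*D′₆, r_*D′₇` for the dual polytope Δ* of the pair (Q₁₂, E₁₈). -/
def M' : Matrix (Fin 4) (Fin 4) ℤ :=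
  !![-2, 1, 0, 1;
    1, 0, 0, 0;
    0, 0, -2, 1;
    1, 0, 1, -2]

/-- The block-diagonal Gram matrix of `U ⊕ A₂`. -/
def UA2 : Matrix (Fin 4) (Fin 4) ℤ :=
  !![0, 1, 0, 0;
    1, 0, 0, 0;
    0, 0, -2, 1;
    0, 0, 1, -2]

/-- The lattice (ℤ⁴, M′) is isometric to U ⊕ A₂: there is a change of basis
P ∈ GL₄(ℤ) with Pᵀ M′ P equal to the block-diagonal matrix with blocks U and A₂. -/
theorem M'_isometric_UA2 :
    ∃ P : Matrix (Fin 4) (Fin 4) ℤ, IsUnit P.det ∧ Pᵀ * M' * P = UA2 := by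
  refine ⟨!![1,0,0,0; 1,1,-1,0; 0,0,0,1; 0,0,1,0], ?_, ?_⟩
  · decide
  · decide
end
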